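/- Let μ be the real Gaussian probability measure with mean m > 0 and standard deviation s > 0, and set β = m/s. Then the probability of the event {x < 0} under μ equals Φ(−β), and the conditional expectation of −x given {x < 0}, namely (∫_{(−∞,0)} (−x) dμ(x)) / μ((−∞,0)), equals s·(φ(β)/Φ(−β) − β). In particular, the normalized expected failure deficit E_f* = E[−x | x < 0]/s of a Gaussian limit-state variable equals F(β) = φ(β)/Φ(−β) − β. -/

import Mathlib

open MeasureTheory Filter

/-- Standard normal density. -/
noncomputable def phi (x : ℝ) : ℝ := Real.exp (-x ^ 2 / 2) / Real.sqrt (2 * Real.pi)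

/-- Standard normal cumulative distribution function. -/
noncomputable def Phi (x : ℝ) : ℝ := ∫ t in Set.Iio x, phi t

/-- Mills-type ratio. -/
noncomputable def r (b : ℝ) : ℝ := phi b / Phi (-b)

/-- The deficit transformation `F`. -/
noncomputable def F (b : ℝ) : ℝ := phi b / Phi (-b) - b

/-! Push the standard normal forward along `z ↦ s z + m`: the event `{x < 0}` pulls back to
`{z < -β}`, giving the probability `Φ(-β)`. Since `φ' z = -z φ z`, the truncated first moment is
`∫_{z < -β} z φ z = -φ β`, so `∫_{x < 0} (-x) dμ = s φ(β) - m Φ(-β)`; divide by `Φ(-β) > 0`. -/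

open Real Set ProbabilityTheory
open scoped Topology

lemma phi_pos (x : ℝ) : 0 < phi x := by
  unfold phi; positivity

lemma phi_neg (x : ℝ) : phi (-x) = phi x := by
  simp [phi]

lemma gaussianPDFReal_zero_one : gaussianPDFReal 0 1 = phi := by
  ext x
  simp only [gaussianPDFReal, NNReal.coe_one, mul_one, sub_zero, phi]
  ring

lemma integrable_phi : Integrable phi := by
  rw [← gaussianPDFReal_zero_one]
  exact integrable_gaussianPDFReal 0 1

lemma integrable_mul_phi : Integrable fun x : ℝ => x * phi x := by
  refine ((integrable_mul_exp_neg_mul_sq one_half_pos).const_mul (√(2 * π))⁻¹).congr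
    (ae_of_all _ fun x => ?_)
  simp only [phi]
  ring_nf

lemma hasDerivAt_phi (x : ℝ) : HasDerivAt phi (-x * phi x) x := by
  have h : HasDerivAt (fun y : ℝ => -y ^ 2 / 2) (-x) x :=
    ((hasDerivAt_pow 2 x).neg.div_const 2).congr_deriv (by norm_num; ring)
  exact (h.exp.div_const (√(2 * π))).congr_deriv (by rw [phi]; ring)

lemma tendsto_phi_atBot : Tendsto phi atBot (𝓝 0) := by
  have h_sq : Tendsto (fun x : ℝ => x ^ 2) atBot atTop := by
    simpa [Function.comp_def] using
      (tendsto_pow_atTop two_ne_zero).comp (tendsto_neg_atBot_atTop (G := ℝ))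
  have h := (tendsto_exp_atBot.comp
    ((tendsto_neg_atTop_atBot.comp h_sq).atBot_div_const two_pos)).div_const (√(2 * π))
  rwa [zero_div] at h

lemma setIntegral_Iio_mul_phi (c : ℝ) : ∫ x in Iio c, x * phi x = -phi c := by
  rw [← integral_Iic_eq_integral_Iio, integral_Iic_of_hasDerivAt_of_tendsto'
    (f := fun x => -phi x) (fun x _ => (hasDerivAt_phi x).neg.congr_deriv (by ring))
    integrable_mul_phi.integrableOn (by simpa using tendsto_phi_atBot.neg), sub_zero]

lemma Phi_pos (c : ℝ) : 0 < Phi c := by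
  rw [Phi, setIntegral_pos_iff_support_of_nonneg_ae (ae_of_all _ fun x => (phi_pos x).le)
    integrable_phi.integrableOn, Function.support_eq_univ fun x => (phi_pos x).ne']
  simp

lemma gaussianReal_zero_one_Iio (c : ℝ) : gaussianReal 0 1 (Iio c) = ENNReal.ofReal (Phi c) := by
  rw [gaussianReal_apply_eq_integral 0 one_ne_zero, gaussianPDFReal_zero_one, Phi]

lemma setIntegral_gaussianReal_zero_one {t : Set ℝ} (ht : MeasurableSet t) (f : ℝ → ℝ) :
    ∫ x in t, f x ∂gaussianReal 0 1 = ∫ x in t, phi x * f x := by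
  rw [← integral_indicator ht, integral_gaussianReal_eq_integral_smul one_ne_zero,
    ← integral_indicator ht, gaussianPDFReal_zero_one]
  congr with x
  by_cases hx : x ∈ t <;> simp [hx]

lemma gaussianReal_eq_map_affine (m s : ℝ) :
    gaussianReal m ⟨s ^ 2, sq_nonneg s⟩ = (gaussianReal 0 1).map fun x => s * x + m := by
  rw [show (fun x => s * x + m) = (· + m) ∘ (s * ·) from rfl,
    ← Measure.map_map (measurable_add_const m) (measurable_const_mul s),
    gaussianReal_map_const_mul, gaussianReal_map_add_const, mul_zero, zero_add, mul_one]
  rfl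

lemma preimage_affine_Iio_zero (m : ℝ) {s : ℝ} (hs : 0 < s) :
    (fun x => s * x + m) ⁻¹' Iio 0 = Iio (-(m / s)) := by
  ext x
  simp only [mem_preimage, mem_Iio, lt_neg, div_lt_iff₀ hs]
  constructor <;> intro h <;> linarith

lemma gaussianReal_Iio_zero (m : ℝ) {s : ℝ} (hs : 0 < s) :
    gaussianReal m ⟨s ^ 2, sq_nonneg s⟩ (Iio 0) = ENNReal.ofReal (Phi (-(m / s))) := by
  rw [gaussianReal_eq_map_affine, Measure.map_apply (by fun_prop) measurableSet_Iio,
    preimage_affine_Iio_zero m hs, gaussianReal_zero_one_Iio]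

lemma setIntegral_Iio_zero_neg_gaussianReal (m : ℝ) {s : ℝ} (hs : 0 < s) :
    ∫ x in Iio 0, -x ∂gaussianReal m ⟨s ^ 2, sq_nonneg s⟩
      = s * phi (m / s) - m * Phi (-(m / s)) := by
  rw [gaussianReal_eq_map_affine, setIntegral_map measurableSet_Iio (by fun_prop) (by fun_prop),
    preimage_affine_Iio_zero m hs, setIntegral_gaussianReal_zero_one measurableSet_Iio]
  calc ∫ x in Iio (-(m / s)), phi x * -(s * x + m)
      = -s * (∫ x in Iio (-(m / s)), x * phi x) - m * ∫ x in Iio (-(m / s)), phi x := by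
        rw [← integral_const_mul, ← integral_const_mul, ← integral_sub
          (integrable_mul_phi.integrableOn.const_mul _) (integrable_phi.integrableOn.const_mul _)]
        congr with x; ring
    _ = s * phi (m / s) - m * Phi (-(m / s)) := by
        rw [setIntegral_Iio_mul_phi, phi_neg, Phi]; ring

theorem gaussian_expected_failure_deficit_general (m s : ℝ) (hs : 0 < s) :
    (ProbabilityTheory.gaussianReal m ⟨s ^ 2, sq_nonneg s⟩) (Set.Iio 0)
        = ENNReal.ofReal (Phi (-(m / s))) ∧
      (∫ x in Set.Iio (0 : ℝ), -x ∂(ProbabilityTheory.gaussianReal m ⟨s ^ 2, sq_nonneg s⟩)) /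
          ((ProbabilityTheory.gaussianReal m ⟨s ^ 2, sq_nonneg s⟩) (Set.Iio 0)).toReal
        = s * (phi (m / s) / Phi (-(m / s)) - m / s) ∧
      (∫ x in Set.Iio (0 : ℝ), -x ∂(ProbabilityTheory.gaussianReal m ⟨s ^ 2, sq_nonneg s⟩)) /
          (s * ((ProbabilityTheory.gaussianReal m ⟨s ^ 2, sq_nonneg s⟩) (Set.Iio 0)).toReal)
        = F (m / s) := by
  have hPhi := Phi_pos (-(m / s))
  have hprob := gaussianReal_Iio_zero m hs
  have hprob_toReal : (gaussianReal m ⟨s ^ 2, sq_nonneg s⟩ (Iio 0)).toReal = Phi (-(m / s)) := by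
    rw [hprob, ENNReal.toReal_ofReal hPhi.le]
  rw [hprob_toReal, setIntegral_Iio_zero_neg_gaussianReal m hs, F]
  refine ⟨hprob, ?_, ?_⟩ <;> field_simp

/-- For a Gaussian measure with mean `m > 0` and standard deviation `s > 0`, setting
`β = m/s`: the failure probability is `Φ(−β)`, the expected failure deficit
`E[−x ∣ x < 0]` equals `s·(φ(β)/Φ(−β) − β)`, and the normalized deficit equals `F(β)`. -/
theorem gaussian_expected_failure_deficit (m s : ℝ) (hm : 0 < m) (hs : 0 < s) :
    (ProbabilityTheory.gaussianReal m ⟨s ^ 2, sq_nonneg s⟩) (Set.Iio 0)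
        = ENNReal.ofReal (Phi (-(m / s))) ∧
      (∫ x in Set.Iio (0 : ℝ), -x ∂(ProbabilityTheory.gaussianReal m ⟨s ^ 2, sq_nonneg s⟩)) /
          ((ProbabilityTheory.gaussianReal m ⟨s ^ 2, sq_nonneg s⟩) (Set.Iio 0)).toReal
        = s * (phi (m / s) / Phi (-(m / s)) - m / s) ∧
      (∫ x in Set.Iio (0 : ℝ), -x ∂(ProbabilityTheory.gaussianReal m ⟨s ^ 2, sq_nonneg s⟩)) /
          (s * ((ProbabilityTheory.gaussianReal m ⟨s ^ 2, sq_nonneg s⟩) (Set.Iio 0)).toReal)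
        = F (m / s) :=
  gaussian_expected_failure_deficit_general m s hs
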